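/- arXiv:0704.2813 — 3 statements merged into one kernel-verified Lean document; each statement's English description precedes it below -/
import Mathlib

section
/- For all natural numbers u, l, d and all n ≥ 0, the (u,l,d)-Motzkin number has the explicit expression m_n^{(u,l,d)} = Σ_{j=0}^{⌊n/2⌋} (1/(j+1)) · C(2j, j) · C(n, 2j) · u^j · d^j · l^{n−2j}, where C(a,b) denotes the binomial coefficient. -/
open PowerSeries Finset

/-- The weight (number of color choices) of a single step of vertical displacement `z`:
up-steps `(1,j)` have weight `u j`, the level-step `(1,0)` has weight `l`, and
down-steps `(1,-j)` have weight `d j`. -/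
def stepWeight (u : ℕ → ℕ) (l : ℕ) (d : ℕ → ℕ) (z : ℤ) : ℕ :=
  if 0 < z then u z.toNat else if z < 0 then d (-z).toNat else l

/-- `motzkinCount r u l d s t n` is the weighted number `|𝒜_{s,t}(n)|` of lattice paths of
length `n` using admissible steps `(1,z)` with `z ∈ {-r, …, r}` (step `i` is encoded by
`f i : Fin (2*r+1)` via `z = (f i : ℤ) - r`), starting at height `s`, ending at height `t`,
and never going below the x-axis; each path is counted with weight the product of the
weights of its steps (i.e. the number of its colorings). -/
def motzkinCount (r : ℕ) (u : ℕ → ℕ) (l : ℕ) (d : ℕ → ℕ) (s t : ℕ) (n : ℕ) : ℕ :=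
  ∑ f : Fin n → Fin (2 * r + 1),
    if (∀ k : Fin (n + 1),
          0 ≤ (s : ℤ) + ∑ i : Fin n, if (i : ℕ) < (k : ℕ) then ((f i : ℤ) - r) else 0) ∧
        (s : ℤ) + (∑ i : Fin n, ((f i : ℤ) - r)) = t
    then ∏ i : Fin n, stepWeight u l d ((f i : ℤ) - r)
    else 0

/-- The generating function `A_{s,t}(x) = Σ_{n≥0} |𝒜_{s,t}(n)| xⁿ ∈ ℚ⟦x⟧`. -/
noncomputable def motzkinGF (r : ℕ) (u : ℕ → ℕ) (l : ℕ) (d : ℕ → ℕ) (s t : ℕ) :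
    PowerSeries ℚ :=
  PowerSeries.mk fun n => (motzkinCount r u l d s t n : ℚ)

/-!
Mark the positions of the level steps: a weighted Motzkin path of length `n` is a choice of
the `m` positions of its non-level steps (`C(n, m)` ways, weight `l ^ (n - m)`) together with a
path of length `m` using up- and down-steps only. Such a path is a Dyck word, so `m = 2 j`,
there are `catalan j` of them, each of weight `(u d) ^ j`, and `catalan j = C(2j, j) / (j + 1)`.
The binomial decomposition is proved for all start and end heights at once, by induction on
the length through the first-step recurrence.
-/

open DyckStep

theorem forall_prefix_sum_nonneg_succ_iff {n : ℕ} {s : ℤ} (hs : 0 ≤ s) (z : Fin (n + 1) → ℤ) :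
    (∀ k : Fin (n + 1 + 1), 0 ≤ s + ∑ i : Fin (n + 1), if (i : ℕ) < k then z i else 0) ↔
      ∀ k : Fin (n + 1), 0 ≤ s + z 0 + ∑ i : Fin n, if (i : ℕ) < k then z i.succ else 0 := by
  simp [Fin.forall_fin_succ (n := n + 1), Fin.sum_univ_succ, hs, add_assoc]

theorem motzkinCount_zero (r : ℕ) (u : ℕ → ℕ) (l : ℕ) (d : ℕ → ℕ) (s t : ℕ) :
    motzkinCount r u l d s t 0 = if s = t then 1 else 0 := by
  simp [motzkinCount]

theorem motzkinCount_succ (r : ℕ) (u : ℕ → ℕ) (l : ℕ) (d : ℕ → ℕ) (s t n : ℕ) :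
    motzkinCount r u l d s t (n + 1) =
      ∑ a : Fin (2 * r + 1), if 0 ≤ (s : ℤ) + (a - r) then
        stepWeight u l d (a - r) * motzkinCount r u l d ((s : ℤ) + (a - r)).toNat t n else 0 := by
  rw [motzkinCount, ← (Fin.consEquiv _).sum_comp, Fintype.sum_prod_type]
  refine sum_congr rfl fun a _ => ?_
  simp only [Fin.consEquiv_apply, forall_prefix_sum_nonneg_succ_iff (Nat.cast_nonneg s)]
  simp only [Fin.prod_univ_succ, Fin.sum_univ_succ, Fin.cons_zero, Fin.cons_succ]
  split_ifs with ha
  · rw [motzkinCount, mul_sum]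
    refine sum_congr rfl fun g _ => ?_
    rw [Int.toNat_of_nonneg ha, ← add_assoc]
    split_ifs <;> simp
  · refine sum_eq_zero fun g _ => if_neg fun h => ha ?_
    simpa using h.1 0

-- At height `0` the factor `0` discards the term with the truncated `s - 1`.
theorem motzkinCount_one_succ (u : ℕ → ℕ) (l : ℕ) (d : ℕ → ℕ) (s t n : ℕ) :
    motzkinCount 1 u l d s t (n + 1) =
      (if s = 0 then 0 else d 1) * motzkinCount 1 u l d (s - 1) t n +
        l * motzkinCount 1 u l d s t n + u 1 * motzkinCount 1 u l d (s + 1) t n := by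
  rw [motzkinCount_succ, Fin.sum_univ_three]
  rcases Nat.eq_zero_or_pos s with rfl | hs
  · simp [stepWeight]
  · have hs' : ((s : ℤ) + -1).toNat = s - 1 := by omega
    simp [stepWeight, hs.ne', hs', Nat.one_le_iff_ne_zero.2 hs.ne']
    omega

theorem motzkinCount_eq_sum_choose (u : ℕ → ℕ) (l : ℕ) (d : ℕ → ℕ) (s t n : ℕ) :
    motzkinCount 1 u l d s t n =
      ∑ m ∈ range (n + 1), n.choose m * (motzkinCount 1 u 0 d s t m * l ^ (n - m)) := by
  induction n generalizing s with
  | zero => simp [motzkinCount_zero]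
  | succ n ih =>
    have pascal := sum_choose_succ_mul (R := ℕ) (fun i j => motzkinCount 1 u 0 d s t i * l ^ j) n
    simp only [Nat.cast_id] at pascal
    rw [motzkinCount_one_succ, ih, ih, ih, pascal]
    simp only [motzkinCount_one_succ (l := 0), mul_sum, ← sum_add_distrib]
    refine sum_congr rfl fun m hm => ?_
    rw [Nat.sub_add_comm (mem_range_succ_iff.1 hm), pow_succ]
    ring

instance : Fintype DyckStep := ⟨{U, D}, fun s => by cases s <;> simp⟩

@[to_additive]
theorem List.prod_map_dyckStep {M : Type*} [CommMonoid M] (f : DyckStep → M)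
    (L : List DyckStep) : (L.map f).prod = f U ^ L.count U * f D ^ L.count D := by
  induction L with
  | nil => simp
  | cons s L ih => cases s <;> simp [ih, pow_succ] <;> ac_rfl

theorem List.count_U_add_count_D (L : List DyckStep) : L.count U + L.count D = L.length := by
  simpa using (L.sum_map_dyckStep fun _ => (1 : ℕ)).symm

theorem List.ofFn_getElem_of_length_eq {α : Type*} {m : ℕ} (L : List α) (h : L.length = m) :
    List.ofFn (fun i : Fin m => L[(i : ℕ)]'(h ▸ i.isLt)) = L := by
  subst h
  exact List.ofFn_getElem

def DyckStep.toMotzkinStep : DyckStep → Fin 3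
  | U => 2
  | D => 0

theorem DyckStep.toMotzkinStep_injective : Function.Injective DyckStep.toMotzkinStep := by
  intro a b
  cases a <;> cases b <;> decide

theorem sum_eq_sum_toMotzkinStep {M : Type*} [AddCommMonoid M] {m : ℕ}
    (F : (Fin m → Fin 3) → M) (hF : ∀ f, (∃ i, f i = 1) → F f = 0) :
    ∑ f, F f = ∑ g : Fin m → DyckStep, F fun i => (g i).toMotzkinStep := by
  refine (Fintype.sum_of_injective (fun (g : Fin m → DyckStep) i => (g i).toMotzkinStep)
    (fun g g' h => funext fun i => toMotzkinStep_injective (congrFun h i)) _ _ ?_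
    fun _ => rfl).symm
  intro f hf
  refine hF f (not_forall_not.1 fun h => hf ⟨fun i => if f i = 2 then U else D, funext fun i => ?_⟩)
  have hcode : ∀ a : Fin 3, a ≠ 1 → a = 0 ∨ a = 2 := by decide
  rcases hcode (f i) (h i) with hi | hi <;> simp [hi, toMotzkinStep]

theorem sum_ite_lt_toMotzkinStep {m : ℕ} (g : Fin m → DyckStep) (k : ℕ) :
    (∑ i : Fin m, if (i : ℕ) < k then ((g i).toMotzkinStep : ℤ) - 1 else 0) =
      ((List.ofFn g).take k).count U - ((List.ofFn g).take k).count D := by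
  rw [← sum_filter, ← List.sum_take_ofFn, List.ofFn_comp' g fun s => (s.toMotzkinStep : ℤ) - 1,
    ← List.map_take, List.sum_map_dyckStep]
  simp [toMotzkinStep]
  ring

def IsDyckList (L : List DyckStep) : Prop :=
  L.count U = L.count D ∧ ∀ i, (L.take i).count D ≤ (L.take i).count U

theorem prefix_sums_nonneg_and_sum_eq_zero_iff_isDyckList {m : ℕ} (g : Fin m → DyckStep) :
    ((∀ k : Fin (m + 1),
        0 ≤ ∑ i : Fin m, if (i : ℕ) < k then ((g i).toMotzkinStep : ℤ) - 1 else 0) ∧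
      ∑ i : Fin m, (((g i).toMotzkinStep : ℤ) - 1) = 0) ↔ IsDyckList (List.ofFn g) := by
  have htotal : ∑ i : Fin m, (((g i).toMotzkinStep : ℤ) - 1) =
      (List.ofFn g).count U - (List.ofFn g).count D := by
    rw [← List.take_of_length_le (List.length_ofFn (f := g)).le, ← sum_ite_lt_toMotzkinStep]
    simp
  simp only [htotal, sum_ite_lt_toMotzkinStep, sub_eq_zero, sub_nonneg, Nat.cast_le, Nat.cast_inj]
  constructor
  · rintro ⟨hprefix, hcount⟩
    refine ⟨hcount, fun i => ?_⟩
    rcases le_or_gt i m with him | him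
    · exact hprefix ⟨i, Nat.lt_succ_of_le him⟩
    · rw [List.take_of_length_le (by simp; omega), hcount]
  · rintro ⟨hcount, hprefix⟩
    exact ⟨fun k => hprefix k, hcount⟩

theorem prod_stepWeight_toMotzkinStep (u : ℕ → ℕ) (l : ℕ) (d : ℕ → ℕ) {m : ℕ}
    (g : Fin m → DyckStep) :
    ∏ i, stepWeight u l d (((g i).toMotzkinStep : ℤ) - 1) =
      u 1 ^ (List.ofFn g).count U * d 1 ^ (List.ofFn g).count D := by
  rw [← List.prod_ofFn, List.ofFn_comp' g fun s => stepWeight u l d ((s.toMotzkinStep : ℤ) - 1),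
    List.prod_map_dyckStep]
  rfl

def isDyckListEquivDyckWord (m : ℕ) :
    {g : Fin m → DyckStep // IsDyckList (List.ofFn g)} ≃ {p : DyckWord // p.toList.length = m} where
  toFun g := ⟨⟨List.ofFn g.1, g.2.1, g.2.2⟩, List.length_ofFn⟩
  invFun p := ⟨fun i => p.1.toList[(i : ℕ)]'(by rw [p.2]; exact i.isLt), by
    rw [List.ofFn_getElem_of_length_eq _ p.2]
    exact ⟨p.1.count_U_eq_count_D, p.1.count_D_le_count_U⟩⟩
  left_inv g := by ext; simp
  right_inv p := Subtype.ext (DyckWord.ext (List.ofFn_getElem_of_length_eq _ p.2))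

theorem DyckWord.card_length_two_mul (j : ℕ) :
    Nat.card {p : DyckWord // p.toList.length = 2 * j} = catalan j := by
  rw [← card_dyckWord_semilength_eq_catalan, ← Nat.card_eq_fintype_card]
  exact Nat.card_congr (Equiv.subtypeEquivRight fun p => by
    rw [← p.two_mul_semilength_eq_length]; omega)

theorem DyckWord.card_length_of_odd {m : ℕ} (hm : Odd m) :
    Nat.card {p : DyckWord // p.toList.length = m} = 0 := by
  have : IsEmpty {p : DyckWord // p.toList.length = m} := ⟨fun p => by
    have := p.1.two_mul_semilength_eq_length
    rw [p.2] at this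
    exact Nat.not_odd_iff_even.2 ⟨_, this.symm.trans (two_mul _)⟩ hm⟩
  exact Nat.card_of_isEmpty

theorem motzkinCount_zero_level (u d : ℕ → ℕ) (m : ℕ) :
    motzkinCount 1 u 0 d 0 0 m =
      Nat.card {p : DyckWord // p.toList.length = m} * (u 1 * d 1) ^ (m / 2) := by
  classical
  rw [motzkinCount, sum_eq_sum_toMotzkinStep]
  · simp only [Nat.cast_zero, Nat.cast_one, zero_add,
      prefix_sums_nonneg_and_sum_eq_zero_iff_isDyckList, prod_stepWeight_toMotzkinStep]
    have hweight : ∀ g : Fin m → DyckStep, IsDyckList (List.ofFn g) →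
        u 1 ^ (List.ofFn g).count U * d 1 ^ (List.ofFn g).count D = (u 1 * d 1) ^ (m / 2) := by
      intro g hg
      have hlen := (List.ofFn g).count_U_add_count_D
      rw [List.length_ofFn, ← hg.1] at hlen
      rw [← hg.1, ← mul_pow]
      congr 1
      omega
    rw [sum_congr rfl fun g _ => ite_congr rfl (hweight g) fun _ => rfl, ← sum_filter, sum_const,
      smul_eq_mul, ← Fintype.card_subtype, ← Nat.card_eq_fintype_card,
      Nat.card_congr (isDyckListEquivDyckWord m)]
  · rintro f ⟨i, hi⟩
    rw [ite_eq_right_iff]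
    exact fun _ => prod_eq_zero (mem_univ i) (by simp [hi, stepWeight])

theorem Finset.sum_range_succ_eq_sum_two_mul {M : Type*} [AddCommMonoid M] (f : ℕ → M)
    (hf : ∀ m, Odd m → f m = 0) (n : ℕ) :
    ∑ m ∈ range (n + 1), f m = ∑ j ∈ range (n / 2 + 1), f (2 * j) := by
  rw [← sum_image (g := (2 * ·)) fun a _ b _ h => by simpa using h]
  refine (sum_subset (fun m hm => ?_) fun m hmn hm => hf m ?_).symm
  · obtain ⟨j, hj, rfl⟩ := mem_image.1 hm
    rw [mem_range] at hj ⊢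
    omega
  · refine Nat.not_even_iff_odd.1 fun ⟨j, hj⟩ => hm (mem_image.2 ⟨j, ?_, by omega⟩)
    rw [mem_range] at hmn ⊢
    omega

theorem catalan_eq_choose_div {K : Type*} [DivisionRing K] [CharZero K] (j : ℕ) :
    (catalan j : K) = (2 * j).choose j / (j + 1) := by
  rw [eq_div_iff (Nat.cast_add_one_ne_zero j), ← Nat.centralBinom_eq_two_mul_choose,
    ← succ_mul_catalan_eq_centralBinom]
  push_cast
  exact (Nat.cast_commute _ _).eq

/-- `m_n^{(u,l,d)} = Σ_{j=0}^{⌊n/2⌋} (1/(j+1))·C(2j,j)·C(n,2j)·uʲdʲl^{n−2j}`. -/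
theorem motzkin_explicit (u l d : ℕ) (n : ℕ) :
    (motzkinCount 1 (fun _ => u) l (fun _ => d) 0 0 n : ℚ) =
      ∑ j ∈ Finset.range (n / 2 + 1),
        (1 / ((j : ℚ) + 1)) * (Nat.choose (2 * j) j : ℚ) * (Nat.choose n (2 * j) : ℚ) *
          (u : ℚ) ^ j * (d : ℚ) ^ j * (l : ℚ) ^ (n - 2 * j) := by
  rw [motzkinCount_eq_sum_choose, Nat.cast_sum, sum_range_succ_eq_sum_two_mul]
  · refine sum_congr rfl fun j _ => ?_
    rw [motzkinCount_zero_level, Nat.mul_div_cancel_left j two_pos, DyckWord.card_length_two_mul]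
    push_cast
    rw [catalan_eq_choose_div]
    ring
  · intro m hm
    rw [motzkinCount_zero_level, DyckWord.card_length_of_odd hm]
    simp
end

section
/- Fix a rank r ≥ 1 and natural number weights u_1,…,u_r, l, d_1,…,d_r, and let A_{s,t}(x) = Σ_{n≥0} |𝒜_{s,t}(n)| x^n ∈ ℚ⟦x⟧. Then the generating function A_{0,0} for the (u,l,d)-Motzkin numbers of rank r satisfies A_{0,0} = 1 + l·x·A_{0,0} + x²·A_{0,0} · Σ_{p=1}^{r} Σ_{q=1}^{r} u_p d_q A_{p−1,q−1}. -/
/-!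
Cutting a path at its first step gives a linear recursion for the generating functions
`A_{s,t}` in the start height `s ≥ 0`. A nonempty path from height `h ≥ 1` that ends at `0`
splits uniquely at its first visit to `0` into a first-passage path and an excursion
`0 → 0`. A first-passage path from `h` is, in turn, a path from `h` to some `q ≥ 1` that stays
at height `≥ 1` (that is, an element of `𝒜_{h-1,q-1}`), followed by the down-step `D_q`.
Rather than building this bijection, note that `A_{h,0}` and (first passage from `h`) · `A_{0,0}`
satisfy the same first-step recursion for `h ≥ 1` and agree for `h ≤ 0`, so their difference is
divisible by every power of `x`. Cutting an excursion at its first step, which is either `L` or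
some `U_p` followed by a path from `p` to `0`, gives the identity.
-/

open PowerSeries Finset

theorem PowerSeries.eq_zero_of_forall_eq_X_mul_mem_span {R ι : Type*} [CommSemiring R]
    {E : ι → R⟦X⟧} (hE : ∀ i, ∃ F ∈ Submodule.span R (Set.range E), E i = X * F) (i : ι) :
    E i = 0 := by
  suffices h : ∀ n i, coeff n (E i) = 0 from ext fun n => by simpa using h n i
  intro n
  induction n with
  | zero =>
    intro i
    obtain ⟨F, -, hEi⟩ := hE i
    simp [hEi]
  | succ n ih =>
    intro i
    obtain ⟨F, hF, hEi⟩ := hE i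
    rw [hEi, coeff_succ_X_mul]
    exact (Submodule.span_le (p := LinearMap.ker (coeff n))).2
      (by rintro _ ⟨j, rfl⟩; exact ih j) hF

lemma sum_Icc_neg_eq_add_sum_Icc_one {M : Type*} [AddCommMonoid M] (r : ℕ) {f : ℤ → M}
    (hf : ∀ z < 0, f z = 0) : ∑ z ∈ Icc (-(r : ℤ)) r, f z = f 0 + ∑ p ∈ Icc 1 r, f p := by
  have hsub : Icc (0 : ℤ) r ⊆ Icc (-(r : ℤ)) r := Icc_subset_Icc (by omega) le_rfl
  have hIcc : Icc (0 : ℤ) r = insert 0 ((Icc 1 r).map Nat.castEmbedding) := by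
    ext z
    simp only [mem_Icc, mem_insert, mem_map, Nat.castEmbedding_apply]
    constructor
    · intro hz
      rcases eq_or_ne z 0 with rfl | hz0
      · exact Or.inl rfl
      · exact Or.inr ⟨z.toNat, by omega, by omega⟩
    · rintro (rfl | ⟨p, hp, rfl⟩) <;> omega
  rw [← sum_subset hsub fun z hz hz' => hf z (by simp only [mem_Icc] at hz hz'; omega), hIcc,
    sum_insert (by simp), sum_map]
  rfl

lemma Fin.sum_univ_sub_eq_sum_Icc {M : Type*} [AddCommMonoid M] (r : ℕ) (g : ℤ → M) :
    ∑ j : Fin (2 * r + 1), g (j - r) = ∑ z ∈ Icc (-(r : ℤ)) r, g z := by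
  rw [Fin.sum_univ_eq_sum_range (fun j => g (j - r)), Int.Icc_eq_finset_map, sum_map,
    show ((r : ℤ) + 1 - -(r : ℤ)).toNat = 2 * r + 1 by omega]
  refine sum_congr rfl fun j _ => ?_
  simp only [Function.Embedding.trans_apply, Nat.castEmbedding_apply, addLeftEmbedding_apply]
  congr 1
  ring

lemma nonneg_prefix_sums_succ_iff {n : ℕ} (s : ℤ) (g : Fin (n + 1) → ℤ) :
    (∀ k : Fin (n + 2), 0 ≤ s + ∑ i : Fin (n + 1), if (i : ℕ) < k then g i else 0) ↔
      0 ≤ s ∧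
        ∀ k : Fin (n + 1), 0 ≤ s + g 0 + ∑ i : Fin n, if (i : ℕ) < k then g i.succ else 0 := by
  rw [Fin.forall_fin_succ]
  refine and_congr (by simp) (forall_congr' fun k => ?_)
  simp only [Fin.sum_univ_succ, Fin.val_zero, Fin.val_succ, Nat.add_lt_add_iff_right,
    Nat.zero_lt_succ, if_true, add_assoc]

section Paths

variable {r : ℕ} {u : ℕ → ℕ} {l : ℕ} {d : ℕ → ℕ}

variable (r u l d) in
/-- `motzkinCount` with integer endpoints, so that the recursion may step below the axis. -/
def pathCount (s t : ℤ) (n : ℕ) : ℕ :=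
  ∑ f : Fin n → Fin (2 * r + 1),
    if (∀ k : Fin (n + 1),
          0 ≤ s + ∑ i : Fin n, if (i : ℕ) < (k : ℕ) then ((f i : ℤ) - r) else 0) ∧
        s + (∑ i : Fin n, ((f i : ℤ) - r)) = t
    then ∏ i : Fin n, stepWeight u l d ((f i : ℤ) - r)
    else 0

lemma pathCount_zero (s t : ℤ) : pathCount r u l d s t 0 = if 0 ≤ s ∧ s = t then 1 else 0 := by
  simp [pathCount]

lemma pathCount_of_neg {s : ℤ} (hs : s < 0) (t : ℤ) (n : ℕ) : pathCount r u l d s t n = 0 :=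
  sum_eq_zero fun f _ => if_neg fun h => by simpa using hs.trans_le (h.1 0)

lemma pathCount_succ {s : ℤ} (hs : 0 ≤ s) (t : ℤ) (n : ℕ) :
    pathCount r u l d s t (n + 1) =
      ∑ z ∈ Icc (-(r : ℤ)) r, stepWeight u l d z * pathCount r u l d (s + z) t n := by
  rw [← Fin.sum_univ_sub_eq_sum_Icc, pathCount,
    ← (Fin.consEquiv fun _ => Fin (2 * r + 1)).sum_comp, Fintype.sum_prod_type]
  refine sum_congr rfl fun j _ => ?_
  simp only [pathCount, mul_sum, mul_ite, mul_zero]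
  refine sum_congr rfl fun f _ => ?_
  simp only [Fin.consEquiv, Equiv.coe_fn_mk, nonneg_prefix_sums_succ_iff, hs, true_and]
  simp only [Fin.sum_univ_succ, Fin.prod_univ_succ, Fin.cons_zero, Fin.cons_succ, add_assoc]

lemma stepWeight_zero : stepWeight u l d 0 = l := rfl

lemma stepWeight_natCast {m : ℕ} (hm : m ≠ 0) : stepWeight u l d m = u m := by
  simp [stepWeight, Nat.pos_of_ne_zero hm]

lemma stepWeight_neg_natCast {m : ℕ} (hm : m ≠ 0) : stepWeight u l d (-m) = d m := by
  simp [stepWeight, Nat.pos_of_ne_zero hm]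

variable (r u l d) in
noncomputable def pathGF (s t : ℤ) : ℚ⟦X⟧ :=
  mk fun n => (pathCount r u l d s t n : ℚ)

lemma motzkinGF_eq_pathGF (s t : ℕ) : motzkinGF r u l d s t = pathGF r u l d s t := rfl

lemma pathGF_of_neg {s : ℤ} (hs : s < 0) (t : ℤ) : pathGF r u l d s t = 0 := by
  ext n
  simp [pathGF, pathCount_of_neg hs]

lemma pathGF_eq_add_X_mul {s : ℤ} (hs : 0 ≤ s) (t : ℤ) :
    pathGF r u l d s t = (if s = t then 1 else 0) +
      X * ∑ z ∈ Icc (-(r : ℤ)) r, C (stepWeight u l d z : ℚ) * pathGF r u l d (s + z) t := by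
  ext n
  cases n with
  | zero => simp [pathGF, pathCount_zero, hs]
  | succ n =>
    simp [pathGF, pathCount_succ hs, coeff_succ_X_mul, apply_ite (coeff (n + 1)), -map_natCast]

variable (r u l d) in
/-- Paths from `h` that touch `0` only at their end: for `h ≠ 0`, a path from `h` to `q`
staying at height `≥ 1` (shifted down by one) followed by the down-step `D_q`. -/
noncomputable def firstPassageGF (h : ℤ) : ℚ⟦X⟧ :=
  if h = 0 then 1 else X * ∑ q ∈ Icc 1 r, C (d q : ℚ) * pathGF r u l d (h - 1) (q - 1)

lemma firstPassageGF_eq_ite_add (h : ℤ) :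
    firstPassageGF r u l d h = (if h = 0 then 1 else 0) +
      X * ∑ q ∈ Icc 1 r, C (d q : ℚ) * pathGF r u l d (h - 1) (q - 1) := by
  rcases eq_or_ne h 0 with rfl | h0
  · simp [firstPassageGF, pathGF_of_neg]
  · simp [firstPassageGF, h0]

lemma firstPassageGF_of_neg {h : ℤ} (hh : h < 0) : firstPassageGF r u l d h = 0 := by
  simp [firstPassageGF, hh.ne, pathGF_of_neg (show h - 1 < 0 by omega)]

lemma firstPassageGF_eq_X_mul {h : ℤ} (hh : 1 ≤ h) :
    firstPassageGF r u l d h =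
      X * ∑ z ∈ Icc (-(r : ℤ)) r, C (stepWeight u l d z : ℚ) * firstPassageGF r u l d (h + z) := by
  obtain ⟨m, rfl⟩ : ∃ m : ℕ, h = m := ⟨h.toNat, by omega⟩
  have hm : m ≠ 0 := by omega
  have hlast : ∑ q ∈ Icc 1 r, C (d q : ℚ) * (if (m : ℤ) - 1 = q - 1 then 1 else 0) =
      ∑ z ∈ Icc (-(r : ℤ)) r, C (stepWeight u l d z : ℚ) * (if (m : ℤ) + z = 0 then 1 else 0) := by
    simp [add_eq_zero_iff_eq_neg', stepWeight_neg_natCast hm, Nat.one_le_iff_ne_zero.2 hm]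
  rw [firstPassageGF, if_neg (by omega)]
  congr 1
  simp only [firstPassageGF_eq_ite_add, pathGF_eq_add_X_mul (show 0 ≤ (m : ℤ) - 1 by omega),
    mul_add, sum_add_distrib, hlast, mul_sum]
  congr 1
  rw [sum_comm]
  refine sum_congr rfl fun z _ => sum_congr rfl fun q _ => ?_
  rw [sub_add_eq_add_sub]
  ring

lemma pathGF_eq_firstPassageGF_mul (h : ℤ) :
    pathGF r u l d h 0 = firstPassageGF r u l d h * pathGF r u l d 0 0 := by
  set E : ℤ → ℚ⟦X⟧ := fun h => pathGF r u l d h 0 - firstPassageGF r u l d h * pathGF r u l d 0 0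
  have hE : ∀ h, ∃ F ∈ Submodule.span ℚ (Set.range E), E h = X * F := by
    intro h
    rcases lt_trichotomy h 0 with hneg | rfl | hpos
    · exact ⟨0, zero_mem _, by simp [E, pathGF_of_neg hneg, firstPassageGF_of_neg hneg]⟩
    · exact ⟨0, zero_mem _, by simp [E, firstPassageGF]⟩
    refine ⟨∑ z ∈ Icc (-(r : ℤ)) r, C (stepWeight u l d z : ℚ) * E (h + z),
      sum_mem fun z _ => ?_, ?_⟩
    · rw [← smul_eq_C_mul]
      exact Submodule.smul_mem _ _ (Submodule.subset_span ⟨h + z, rfl⟩)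
    · simp only [E, pathGF_eq_add_X_mul hpos.le, if_neg hpos.ne', zero_add,
        firstPassageGF_eq_X_mul (show 1 ≤ h by omega), mul_sub, sum_sub_distrib, ← mul_assoc,
        ← sum_mul]
  exact sub_eq_zero.1 (eq_zero_of_forall_eq_X_mul_mem_span hE h)

lemma pathGF_zero_zero_eq :
    pathGF r u l d 0 0 = 1 + X * (C (l : ℚ) +
      ∑ p ∈ Icc 1 r, C (u p : ℚ) * firstPassageGF r u l d p) * pathGF r u l d 0 0 := by
  have hsplit := sum_Icc_neg_eq_add_sum_Icc_one r
    (f := fun z => C (stepWeight u l d z : ℚ) * firstPassageGF r u l d z)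
    fun z hz => by simp [firstPassageGF_of_neg hz]
  have hup : ∑ p ∈ Icc 1 r, C (stepWeight u l d p : ℚ) * firstPassageGF r u l d p =
      ∑ p ∈ Icc 1 r, C (u p : ℚ) * firstPassageGF r u l d p :=
    sum_congr rfl fun p hp => by
      rw [stepWeight_natCast (by simp only [mem_Icc] at hp; omega)]
  conv_lhs => rw [pathGF_eq_add_X_mul le_rfl, if_pos rfl]
  rw [sum_congr rfl fun z _ => by rw [zero_add, pathGF_eq_firstPassageGF_mul z, ← mul_assoc],
    ← sum_mul, hsplit, hup, stepWeight_zero, firstPassageGF, if_pos rfl, mul_one, mul_assoc]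

lemma firstPassageGF_natCast {p : ℕ} (hp : 1 ≤ p) :
    firstPassageGF r u l d p =
      X * ∑ q ∈ Icc 1 r, C (d q : ℚ) * motzkinGF r u l d (p - 1) (q - 1) := by
  rw [firstPassageGF, if_neg (by omega)]
  refine congrArg (X * ·) (sum_congr rfl fun q hq => ?_)
  rw [motzkinGF_eq_pathGF, Nat.cast_pred hp, Nat.cast_pred (mem_Icc.1 hq).1]

end Paths

theorem motzkin_rank_gf_eq_general (r : ℕ) (u : ℕ → ℕ) (l : ℕ) (d : ℕ → ℕ) :
    motzkinGF r u l d 0 0 =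
      1 + C (l : ℚ) * X * motzkinGF r u l d 0 0
        + X ^ 2 * motzkinGF r u l d 0 0 *
            ∑ p ∈ Finset.Icc 1 r, ∑ q ∈ Finset.Icc 1 r,
              C ((u p : ℚ) * (d q : ℚ)) * motzkinGF r u l d (p - 1) (q - 1) := by
  have hup : ∑ p ∈ Icc 1 r, C (u p : ℚ) * firstPassageGF r u l d p =
      X * ∑ p ∈ Icc 1 r, ∑ q ∈ Icc 1 r,
        C ((u p : ℚ) * (d q : ℚ)) * motzkinGF r u l d (p - 1) (q - 1) := by
    rw [mul_sum]
    refine sum_congr rfl fun p hp => ?_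
    rw [firstPassageGF_natCast (mem_Icc.1 hp).1, mul_sum, mul_sum, mul_sum]
    refine sum_congr rfl fun q _ => ?_
    rw [map_mul]
    ring
  have hA : motzkinGF r u l d 0 0 = 1 + X * (C (l : ℚ) + X * ∑ p ∈ Icc 1 r, ∑ q ∈ Icc 1 r,
      C ((u p : ℚ) * (d q : ℚ)) * motzkinGF r u l d (p - 1) (q - 1)) * motzkinGF r u l d 0 0 := by
    rw [← hup]
    exact pathGF_zero_zero_eq
  exact hA.trans (by ring)

/-- `A_{0,0} = 1 + l·x·A_{0,0} + x²·A_{0,0}·Σ_{p=1}^{r}Σ_{q=1}^{r} u_p d_q A_{p−1,q−1}`. -/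
theorem motzkin_rank_gf_eq (r : ℕ) (hr : 1 ≤ r) (u : ℕ → ℕ) (l : ℕ) (d : ℕ → ℕ) :
    motzkinGF r u l d 0 0 =
      1 + C (l : ℚ) * X * motzkinGF r u l d 0 0
        + X ^ 2 * motzkinGF r u l d 0 0 *
            ∑ p ∈ Finset.Icc 1 r, ∑ q ∈ Finset.Icc 1 r,
              C ((u p : ℚ) * (d q : ℚ)) * motzkinGF r u l d (p - 1) (q - 1) :=
  motzkin_rank_gf_eq_general r u l d
end

section
/- For rank r = 2 with natural number weights u_1, u_2, l, d_1, d_2, the generating function A = A_{0,0}(x) ∈ ℚ⟦x⟧ for the (u,l,d)-Motzkin numbers of rank 2 satisfies the polynomial equation 0 = 1 + (lx−1)A − x²(d_2u_2 − d_1u_1)A² + x²(x u_1² d_2 + x u_2 d_1² − 2xl u_2 d_2 + 2 d_2 u_2)A³ − u_2 d_2 x⁴ (d_2 u_2 − d_1 u_1)A⁴ + x⁴ u_2² d_2² (lx−1)A⁵ + x⁶ u_2³ d_2³ A⁶. -/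
open PowerSeries Finset

/-!
Cut a path at its first visit to a lower height. If `f` and `g` count the first descents from
height 1 to 0 and from 2 to 1, and `e` counts the first descents of the reversed walk (i.e. the
last ascents from 0 to 1), then with `A = A_{0,0}`
  `A = 1 + xA (l + u₁ f + u₂ g)`,  `f = xA (d₁ + d₂ e)`,  `e = xA (u₁ + u₂ f)`,
  `g = xA (d₁ f + d₂ (1 + f e))`,
and eliminating `f`, `e`, `g` from this system gives the sextic equation for `A`.
-/

theorem PowerSeries.eq_zero_of_X_pow_dvd_succ {R ι : Type*} [Semiring R] {E : ι → R⟦X⟧}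
    (h : ∀ n, (∀ i, X ^ n ∣ E i) → ∀ i, X ^ (n + 1) ∣ E i) (i : ι) : E i = 0 := by
  have hdvd : ∀ n i, X ^ n ∣ E i := fun n => by
    induction n with
    | zero => simp
    | succ n ih => exact h n ih
  ext n
  simpa using X_pow_dvd_iff.mp (hdvd (n + 1) i) n n.lt_succ_self

namespace Motzkin

section FirstStep

variable {r : ℕ} {u : ℕ → ℕ} {l : ℕ} {d : ℕ → ℕ}

theorem motzkinCount_zero (s t : ℕ) :
    motzkinCount r u l d s t 0 = if s = t then 1 else 0 := by
  simp [motzkinCount]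

theorem motzkinCount_succ (s t n : ℕ) :
    motzkinCount r u l d s t (n + 1) = ∑ z : Fin (2 * r + 1),
      if 0 ≤ (s : ℤ) + ((z : ℤ) - r) then
        stepWeight u l d ((z : ℤ) - r) *
          motzkinCount r u l d ((s : ℤ) + ((z : ℤ) - r)).toNat t n
      else 0 := by
  rw [motzkinCount, ← (Fin.consEquiv fun _ => Fin (2 * r + 1)).sum_comp, Fintype.sum_prod_type]
  refine sum_congr rfl fun z _ => ?_
  simp only [Fin.consEquiv_apply, Fin.forall_fin_succ (n := n + 1), Fin.sum_univ_succ,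
    Fin.cons_zero, Fin.cons_succ, Fin.val_zero, Fin.val_succ, Nat.add_lt_add_iff_right,
    Nat.zero_lt_succ, Nat.not_lt_zero, if_true, if_false, sum_const_zero, add_zero,
    Fin.prod_univ_succ]
  split_ifs with hz
  · rw [motzkinCount, mul_sum]
    refine sum_congr rfl fun g _ => ?_
    rw [Int.toNat_of_nonneg hz, mul_ite, mul_zero]
    simp only [Nat.cast_nonneg, true_and, add_assoc]
  · refine sum_eq_zero fun g _ => if_neg fun h => hz ?_
    simpa using h.1.2 0

end FirstStep

section RankTwo

variable {R : Type*} [CommRing R] (u₁ u₂ l d₁ d₂ : R)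

/-- `|𝒜_{s,t}(n)|` for rank 2, with weights in `R`, by the first-step recursion. Heights are
integers so that `s - 2` needs no truncation. -/
def weightedPaths : ℕ → ℤ → ℤ → R
  | 0, s, t => if s = t ∧ 0 ≤ s then 1 else 0
  | n + 1, s, t =>
    if s < 0 then 0
    else d₂ * weightedPaths n (s - 2) t + d₁ * weightedPaths n (s - 1) t
      + l * weightedPaths n s t + u₁ * weightedPaths n (s + 1) t + u₂ * weightedPaths n (s + 2) t

theorem weightedPaths_zero (s t : ℤ) :
    weightedPaths u₁ u₂ l d₁ d₂ 0 s t = if s = t ∧ 0 ≤ s then 1 else 0 := rfl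

theorem weightedPaths_succ (n : ℕ) (s t : ℤ) :
    weightedPaths u₁ u₂ l d₁ d₂ (n + 1) s t =
      if s < 0 then 0
      else d₂ * weightedPaths u₁ u₂ l d₁ d₂ n (s - 2) t
        + d₁ * weightedPaths u₁ u₂ l d₁ d₂ n (s - 1) t + l * weightedPaths u₁ u₂ l d₁ d₂ n s t
        + u₁ * weightedPaths u₁ u₂ l d₁ d₂ n (s + 1) t
        + u₂ * weightedPaths u₁ u₂ l d₁ d₂ n (s + 2) t := rfl

theorem weightedPaths_of_neg_left {s : ℤ} (hs : s < 0) (n : ℕ) (t : ℤ) :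
    weightedPaths u₁ u₂ l d₁ d₂ n s t = 0 := by
  cases n with
  | zero => rw [weightedPaths_zero, if_neg (by omega)]
  | succ n => rw [weightedPaths_succ, if_pos hs]

theorem weightedPaths_of_neg_right {t : ℤ} (ht : t < 0) (n : ℕ) (s : ℤ) :
    weightedPaths u₁ u₂ l d₁ d₂ n s t = 0 := by
  induction n generalizing s with
  | zero => rw [weightedPaths_zero, if_neg (by omega)]
  | succ n ih => simp only [weightedPaths_succ, ih, mul_zero, add_zero, ite_self]

theorem weightedPaths_succ_right (n : ℕ) (s t : ℤ) :
    weightedPaths u₁ u₂ l d₁ d₂ (n + 1) s t =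
      if t < 0 then 0
      else u₂ * weightedPaths u₁ u₂ l d₁ d₂ n s (t - 2)
        + u₁ * weightedPaths u₁ u₂ l d₁ d₂ n s (t - 1) + l * weightedPaths u₁ u₂ l d₁ d₂ n s t
        + d₁ * weightedPaths u₁ u₂ l d₁ d₂ n s (t + 1)
        + d₂ * weightedPaths u₁ u₂ l d₁ d₂ n s (t + 2) := by
  induction n generalizing s with
  | zero =>
    simp only [weightedPaths_succ, weightedPaths_zero]
    split_ifs <;> first | omega | ring
  | succ n ih =>
    conv_lhs => rw [weightedPaths_succ, ih, ih, ih, ih, ih]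
    simp only [weightedPaths_succ (n := n)]
    split_ifs <;> ring

theorem weightedPaths_swap (n : ℕ) (s t : ℤ) :
    weightedPaths u₁ u₂ l d₁ d₂ n s t = weightedPaths d₁ d₂ l u₁ u₂ n t s := by
  induction n generalizing s t with
  | zero => simp only [weightedPaths_zero]; split_ifs <;> first | rfl | omega
  | succ n ih => rw [weightedPaths_succ, ih, ih, ih, ih, ih, weightedPaths_succ_right]

noncomputable def pathGF (s t : ℤ) : R⟦X⟧ :=
  PowerSeries.mk fun n => weightedPaths u₁ u₂ l d₁ d₂ n s t

theorem pathGF_of_neg_left {s : ℤ} (hs : s < 0) (t : ℤ) : pathGF u₁ u₂ l d₁ d₂ s t = 0 := by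
  ext n
  simp [pathGF, weightedPaths_of_neg_left _ _ _ _ _ hs]

theorem pathGF_of_neg_right {t : ℤ} (ht : t < 0) (s : ℤ) : pathGF u₁ u₂ l d₁ d₂ s t = 0 := by
  ext n
  simp [pathGF, weightedPaths_of_neg_right _ _ _ _ _ ht]

theorem pathGF_swap (s t : ℤ) : pathGF u₁ u₂ l d₁ d₂ s t = pathGF d₁ d₂ l u₁ u₂ t s := by
  ext n
  simp [pathGF, weightedPaths_swap u₁ u₂ l d₁ d₂ n s t]

theorem pathGF_eq_first_step {s : ℤ} (hs : 0 ≤ s) (t : ℤ) :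
    pathGF u₁ u₂ l d₁ d₂ s t = C (if s = t then 1 else 0)
      + X * (C d₂ * pathGF u₁ u₂ l d₁ d₂ (s - 2) t + C d₁ * pathGF u₁ u₂ l d₁ d₂ (s - 1) t
        + C l * pathGF u₁ u₂ l d₁ d₂ s t + C u₁ * pathGF u₁ u₂ l d₁ d₂ (s + 1) t
        + C u₂ * pathGF u₁ u₂ l d₁ d₂ (s + 2) t) := by
  ext (_ | n)
  · simp [pathGF, weightedPaths_zero, hs]
  · split_ifs <;> simp [pathGF, coeff_succ_X_mul, weightedPaths_succ, hs.not_gt]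

theorem pathGF_eq_last_step (s : ℤ) {t : ℤ} (ht : 0 ≤ t) :
    pathGF u₁ u₂ l d₁ d₂ s t = C (if s = t then 1 else 0)
      + X * (C u₂ * pathGF u₁ u₂ l d₁ d₂ s (t - 2) + C u₁ * pathGF u₁ u₂ l d₁ d₂ s (t - 1)
        + C l * pathGF u₁ u₂ l d₁ d₂ s t + C d₁ * pathGF u₁ u₂ l d₁ d₂ s (t + 1)
        + C d₂ * pathGF u₁ u₂ l d₁ d₂ s (t + 2)) := by
  conv_lhs => rw [pathGF_swap, pathGF_eq_first_step _ _ _ _ _ ht]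
  simp only [pathGF_swap d₁ d₂ l u₁ u₂ _ s, eq_comm (a := t)]

/-- Paths from `σ + 1` whose first visit to height `0` is their last step: before it they stay
at height `≥ 1` and end at `1` or `2` (a path from `σ` to `0` or `1`, shifted up by one). -/
noncomputable def firstPassageGF (σ : ℤ) : R⟦X⟧ :=
  X * (C d₁ * pathGF u₁ u₂ l d₁ d₂ σ 0 + C d₂ * pathGF u₁ u₂ l d₁ d₂ σ 1)

/-- Cut a path from `σ + 1` at its first visit to `0`; a path that never visits `0` is a path
from `σ` shifted up by one. In the proof, the defect `E` satisfies the last-step recursion with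
no constant term, so every power of `X` divides it. -/
theorem pathGF_add_one_left {σ : ℤ} (hσ : 0 ≤ σ) (t : ℤ) :
    pathGF u₁ u₂ l d₁ d₂ (σ + 1) t = pathGF u₁ u₂ l d₁ d₂ σ (t - 1)
      + firstPassageGF u₁ u₂ l d₁ d₂ σ * pathGF u₁ u₂ l d₁ d₂ 0 t := by
  let E : ℤ → R⟦X⟧ := fun t => pathGF u₁ u₂ l d₁ d₂ (σ + 1) t
    - pathGF u₁ u₂ l d₁ d₂ σ (t - 1) - firstPassageGF u₁ u₂ l d₁ d₂ σ * pathGF u₁ u₂ l d₁ d₂ 0 t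
  have hneg : ∀ t < 0, E t = 0 := fun t ht => by
    simp [E, pathGF_of_neg_right _ _ _ _ _ ht,
      pathGF_of_neg_right _ _ _ _ _ (by omega : t - 1 < 0)]
  have hrec : ∀ t, 0 ≤ t → E t = X * (C u₂ * E (t - 2) + C u₁ * E (t - 1) + C l * E t
      + C d₁ * E (t + 1) + C d₂ * E (t + 2)) := by
    intro t ht
    have h1 := pathGF_eq_last_step u₁ u₂ l d₁ d₂ (σ + 1) ht
    have h3 := pathGF_eq_last_step u₁ u₂ l d₁ d₂ 0 ht
    rcases ht.eq_or_lt with rfl | ht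
    · simp only [show σ + 1 ≠ 0 by omega, if_false, if_true, map_zero, map_one] at h1 h3
      simp (disch := omega) only [E, pathGF_of_neg_right, Int.reduceAdd, Int.reduceSub]
        at h1 h3 ⊢
      linear_combination (norm := skip) h1 - firstPassageGF u₁ u₂ l d₁ d₂ σ * h3
      rw [firstPassageGF]
      ring
    · have h2 := pathGF_eq_last_step u₁ u₂ l d₁ d₂ σ (by omega : 0 ≤ t - 1)
      simp only [show σ + 1 = t ↔ σ = t - 1 by omega, show (0 : ℤ) ≠ t by omega, if_false,
        map_zero, zero_add] at h1 h3
      simp only [E]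
      linear_combination (norm := ring_nf) h1 - h2 - firstPassageGF u₁ u₂ l d₁ d₂ σ * h3
  have hdvd : ∀ n, (∀ t, X ^ n ∣ E t) → ∀ t, X ^ (n + 1) ∣ E t := by
    intro n hn t
    rcases lt_or_ge t 0 with ht | ht
    · rw [hneg t ht]; exact dvd_zero _
    · rw [hrec t ht, pow_succ']
      exact mul_dvd_mul_left X ((((((hn _).mul_left _).add ((hn _).mul_left _)).add
        ((hn _).mul_left _)).add ((hn _).mul_left _)).add ((hn _).mul_left _))
  linear_combination PowerSeries.eq_zero_of_X_pow_dvd_succ hdvd t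

theorem pathGF_zero_zero_relations :
    let A := pathGF u₁ u₂ l d₁ d₂ 0 0
    let f := firstPassageGF u₁ u₂ l d₁ d₂ 0
    let e := firstPassageGF d₁ d₂ l u₁ u₂ 0
    let g := firstPassageGF u₁ u₂ l d₁ d₂ 1
    f = X * A * (C d₁ + C d₂ * e) ∧ e = X * A * (C u₁ + C u₂ * f) ∧
      g = X * A * (C d₁ * f + C d₂ * (1 + f * e)) ∧
      A = 1 + X * A * (C l + C u₁ * f + C u₂ * g) := by
  intro A f e g
  have h10 : pathGF u₁ u₂ l d₁ d₂ 1 0 = f * A := by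
    simpa [pathGF_of_neg_right] using pathGF_add_one_left u₁ u₂ l d₁ d₂ le_rfl 0
  have h01 : pathGF u₁ u₂ l d₁ d₂ 0 1 = e * A := by
    simpa [pathGF_of_neg_right, ← pathGF_swap] using
      pathGF_add_one_left d₁ d₂ l u₁ u₂ le_rfl 0
  have h11 : pathGF u₁ u₂ l d₁ d₂ 1 1 = A + f * pathGF u₁ u₂ l d₁ d₂ 0 1 := by
    simpa using pathGF_add_one_left u₁ u₂ l d₁ d₂ le_rfl 1
  have h20 : pathGF u₁ u₂ l d₁ d₂ 2 0 = g * A := by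
    simpa [pathGF_of_neg_right] using pathGF_add_one_left u₁ u₂ l d₁ d₂ zero_le_one 0
  have hA : A = 1 + X * (C l * A + C u₁ * pathGF u₁ u₂ l d₁ d₂ 1 0
      + C u₂ * pathGF u₁ u₂ l d₁ d₂ 2 0) := by
    simpa [pathGF_of_neg_left] using pathGF_eq_first_step u₁ u₂ l d₁ d₂ le_rfl 0
  have he : e = X * (C u₁ * A + C u₂ * pathGF u₁ u₂ l d₁ d₂ 1 0) := by
    simp only [e, firstPassageGF, ← pathGF_swap, A]
  refine ⟨?_, ?_, ?_, ?_⟩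
  · simp only [f, firstPassageGF, h01]; ring
  · rw [he, h10]; ring
  · simp only [g, firstPassageGF, h10, h11, h01]; ring
  · rw [h10, h20] at hA; linear_combination hA

end RankTwo

theorem motzkinCount_two_eq_weightedPaths {R : Type*} [CommRing R] (u : ℕ → ℕ) (l : ℕ)
    (d : ℕ → ℕ) (n s t : ℕ) :
    (motzkinCount 2 u l d s t n : R) = weightedPaths (u 1 : R) (u 2) l (d 1) (d 2) n s t := by
  induction n generalizing s with
  | zero => simp [motzkinCount_zero, weightedPaths_zero]
  | succ n ih =>
    have hstep : ∀ (w : ℕ) (δ : ℤ),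
        ((if 0 ≤ (s : ℤ) + δ then w * motzkinCount 2 u l d ((s : ℤ) + δ).toNat t n
          else 0 : ℕ) : R) = w * weightedPaths (u 1 : R) (u 2) l (d 1) (d 2) n (s + δ) t := by
      intro w δ
      split_ifs with h
      · rw [Nat.cast_mul, ih, Int.toNat_of_nonneg h]
      · rw [Nat.cast_zero, weightedPaths_of_neg_left _ _ _ _ _ (by omega), mul_zero]
    rw [motzkinCount_succ, Nat.cast_sum, Fin.sum_univ_five, hstep, hstep, hstep, hstep, hstep,
      weightedPaths_succ, if_neg (by omega)]
    norm_num [stepWeight, sub_eq_add_neg, show Int.toNat 2 = 2 from rfl]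

end Motzkin

/-- Writing `y = xA` and `Δ = 1 - u₂d₂y²`, the first two relations give `fΔ` and `eΔ` as
polynomials in `y`; multiplying the equation for `A` by `Δ²` then leaves a polynomial in `x, A`. -/
theorem sextic_of_firstPassage_relations {R : Type*} [CommRing R]
    {x A f e g u₁ u₂ l d₁ d₂ : R}
    (hf : f = x * A * (d₁ + d₂ * e)) (he : e = x * A * (u₁ + u₂ * f))
    (hg : g = x * A * (d₁ * f + d₂ * (1 + f * e)))
    (hA : A = 1 + x * A * (l + u₁ * f + u₂ * g)) :
    0 = 1 + (l * x - 1) * A - x ^ 2 * (d₂ * u₂ - d₁ * u₁) * A ^ 2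
      + x ^ 2 * (x * (u₁ ^ 2 * d₂) + x * (u₂ * d₁ ^ 2) - 2 * x * (l * u₂ * d₂) + 2 * d₂ * u₂)
        * A ^ 3
      - u₂ * d₂ * x ^ 4 * (d₂ * u₂ - d₁ * u₁) * A ^ 4
      + x ^ 4 * (u₂ ^ 2 * d₂ ^ 2) * (l * x - 1) * A ^ 5 + x ^ 6 * (u₂ ^ 3 * d₂ ^ 3) * A ^ 6 := by
  set y := x * A
  set Δ := 1 - u₂ * d₂ * y ^ 2
  have hfΔ : f * Δ = y * d₁ + y ^ 2 * d₂ * u₁ := by linear_combination hf + y * d₂ * he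
  have heΔ : e * Δ = y * u₁ + y ^ 2 * u₂ * d₁ := by linear_combination he + y * u₂ * hf
  have hgΔ : g * Δ ^ 2 = y * (d₁ * (y * d₁ + y ^ 2 * d₂ * u₁) * Δ + d₂ * Δ ^ 2
      + d₂ * (y * d₁ + y ^ 2 * d₂ * u₁) * (y * u₁ + y ^ 2 * u₂ * d₁)) := by
    linear_combination Δ ^ 2 * hg + y * d₁ * Δ * hfΔ + y * d₂ * (e * Δ) * hfΔ
      + y * d₂ * (y * d₁ + y ^ 2 * d₂ * u₁) * heΔ
  linear_combination Δ ^ 2 * hA + y * u₁ * Δ * hfΔ + y * u₂ * hgΔ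

/-- the generating function `A = A_{0,0}` of the `(u,l,d)`-Motzkin numbers of
rank 2 satisfies `0 = 1 + (lx−1)A − x²(d₂u₂−d₁u₁)A² + x²(xu₁²d₂+xu₂d₁²−2xlu₂d₂+2d₂u₂)A³
− u₂d₂x⁴(d₂u₂−d₁u₁)A⁴ + x⁴u₂²d₂²(lx−1)A⁵ + x⁶u₂³d₂³A⁶`. -/
theorem motzkin_rank_two_gf_poly (u₁ u₂ l d₁ d₂ : ℕ)
    (A : PowerSeries ℚ)
    (hA : A = motzkinGF 2 (fun p => if p = 1 then u₁ else if p = 2 then u₂ else 0) l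
      (fun q => if q = 1 then d₁ else if q = 2 then d₂ else 0) 0 0) :
    (0 : PowerSeries ℚ) =
      1 + (C (l : ℚ) * X - 1) * A
        - X ^ 2 * C ((d₂ : ℚ) * (u₂ : ℚ) - (d₁ : ℚ) * (u₁ : ℚ)) * A ^ 2
        + X ^ 2 *
            (X * C ((u₁ : ℚ) ^ 2 * (d₂ : ℚ)) + X * C ((u₂ : ℚ) * (d₁ : ℚ) ^ 2)
              - 2 * X * C ((l : ℚ) * (u₂ : ℚ) * (d₂ : ℚ)) + C (2 * (d₂ : ℚ) * (u₂ : ℚ))) *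
            A ^ 3
        - C ((u₂ : ℚ) * (d₂ : ℚ)) * X ^ 4 *
            C ((d₂ : ℚ) * (u₂ : ℚ) - (d₁ : ℚ) * (u₁ : ℚ)) * A ^ 4
        + X ^ 4 * C ((u₂ : ℚ) ^ 2 * (d₂ : ℚ) ^ 2) * (C (l : ℚ) * X - 1) * A ^ 5
        + X ^ 6 * C ((u₂ : ℚ) ^ 3 * (d₂ : ℚ) ^ 3) * A ^ 6 := by
  obtain ⟨hf, he, hg, hAf⟩ := Motzkin.pathGF_zero_zero_relations (u₁ : ℚ) u₂ l d₁ d₂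
  have hA_path : A = Motzkin.pathGF (u₁ : ℚ) u₂ l d₁ d₂ 0 0 := by
    ext n
    simp [hA, motzkinGF, Motzkin.pathGF, Motzkin.motzkinCount_two_eq_weightedPaths]
  rw [hA_path]
  simp only [map_mul, map_sub, map_pow, map_ofNat]
  linear_combination sextic_of_firstPassage_relations hf he hg hAf
end
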